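/- Let g = 2 and let B be a diagonal positive definite symmetric bilinear form on ℝ², i.e. with matrix diag(b₁₁, b₂₂) where b₁₁, b₂₂ > 0. Then the unit square σ₅ = conv{0, s₁, s₂, s₁+s₂} is a Delaunay cell of B, and σ₅ = σ₁ ∪ σ₂ = σ₃ ∪ σ₄, where σ₁ = conv{0, s₁, s₁+s₂}, σ₂ = conv{0, s₂, s₁+s₂}, σ₃ = conv{0, s₁, s₂}, σ₄ = conv{s₁, s₂, s₁+s₂}. -/
import Mathlib


open Matrix Set

noncomputable section

/-- The standard lattice `ℤ^g` sitting inside `ℝ^g`. -/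
def latticePts (g : ℕ) : Set (Fin g → ℝ) :=
  Set.range (fun a : Fin g → ℤ => fun i => (a i : ℝ))

/-- `σ` is a (closed) Delaunay cell of the bilinear form `B`: there is an `α ∈ ℝ^g`
such that `σ` is the convex hull of the lattice points nearest to `α`
(with respect to the distance defined by `B`). -/
def IsDelaunayCell {g : ℕ} (B : (Fin g → ℝ) → (Fin g → ℝ) → ℝ)
    (σ : Set (Fin g → ℝ)) : Prop :=
  ∃ α : Fin g → ℝ, σ = convexHull ℝ
    {a | a ∈ latticePts g ∧ ∀ b ∈ latticePts g, B (a - α) (a - α) ≤ B (b - α) (b - α)}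

/-- `C(0,S)`: the cone generated by `S` over the nonnegative reals. -/
def cone0 {g : ℕ} (S : Set (Fin g → ℝ)) : Set (Fin g → ℝ) :=
  {x | ∃ r : ℝ, 0 ≤ r ∧ ∃ y ∈ convexHull ℝ S, x = r • y}

/-- `Semi(0, S ∩ ℤ^g)`: the additive submonoid generated by the lattice points of `S`. -/
def semi0 {g : ℕ} (S : Set (Fin g → ℝ)) : Set (Fin g → ℝ) :=
  (AddSubmonoid.closure (S ∩ latticePts g) : AddSubmonoid (Fin g → ℝ))

/-- The standard basis vector `s_i` of `ℝ^g`. -/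
def stdV (g : ℕ) (i : Fin g) : Fin g → ℝ := Pi.single i 1

/-- Translation of a subset of `ℝ^g` by a lattice vector `v ∈ ℤ^g`. -/
def zTrans {g : ℕ} (v : Fin g → ℤ) (S : Set (Fin g → ℝ)) : Set (Fin g → ℝ) :=
  (fun x => (fun i => (v i : ℝ)) + x) '' S


section AuxDelaunay

lemma combo3Aux {E : Type*} [AddCommGroup E] [Module ℝ E] (a b c : E) (t₀ t₁ t₂ : ℝ)
    (h₀ : 0 ≤ t₀) (h₁ : 0 ≤ t₁) (h₂ : 0 ≤ t₂) (hs : t₀ + t₁ + t₂ = 1) :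
    t₀ • a + t₁ • b + t₂ • c ∈ convexHull ℝ {a, b, c} := by
  have := Finset.centerMass_mem_convexHull (s := ({a,b,c} : Set E))
    (t := (Finset.univ : Finset (Fin 3)))
    (w := ![t₀, t₁, t₂]) (z := ![a, b, c]) ?_ ?_ ?_
  · simpa [Finset.centerMass, Fin.sum_univ_three, hs] using this
  · intro i _; fin_cases i <;> assumption
  · simp [Fin.sum_univ_three, hs]
  · intro i _; fin_cases i <;> simp

lemma reconAux (z : Fin 2 → ℝ) (t₀ t₁ t₂ : ℝ) (a b c : Fin 2 → ℝ)
    (h0 : t₀ * a 0 + t₁ * b 0 + t₂ * c 0 = z 0)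
    (h1 : t₀ * a 1 + t₁ * b 1 + t₂ * c 1 = z 1) :
    t₀ • a + t₁ • b + t₂ • c = z := by
  funext i; fin_cases i <;> simpa using (by assumption)

lemma squareBoundsAux (z : Fin 2 → ℝ)
    (hz : z ∈ convexHull ℝ {(0 : Fin 2 → ℝ), stdV 2 0, stdV 2 1, stdV 2 0 + stdV 2 1}) :
    (0 ≤ z 0 ∧ z 0 ≤ 1) ∧ (0 ≤ z 1 ∧ z 1 ≤ 1) := by
  have hsub : convexHull ℝ {(0 : Fin 2 → ℝ), stdV 2 0, stdV 2 1, stdV 2 0 + stdV 2 1} ⊆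
      Icc (0 : Fin 2 → ℝ) 1 := by
    apply convexHull_min _ (convex_Icc _ _)
    intro x hx
    simp only [Set.mem_insert_iff, Set.mem_singleton_iff] at hx
    rcases hx with rfl | rfl | rfl | rfl <;>
      constructor <;> intro i <;> fin_cases i <;>
        simp [stdV, Pi.single_apply]
  have h := hsub hz
  exact ⟨⟨h.1 0, h.2 0⟩, ⟨h.1 1, h.2 1⟩⟩

lemma intboundAux (n : ℤ) : (1/4 : ℝ) ≤ ((n : ℝ) - 1/2)^2 := by
  rcases le_or_gt n 0 with h | h
  · have : (n : ℝ) ≤ 0 := by exact_mod_cast h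
    nlinarith
  · have : (1 : ℝ) ≤ (n : ℝ) := by exact_mod_cast h
    nlinarith

lemma inteqAux (n : ℤ) (h : ((n : ℝ) - 1/2)^2 ≤ 1/4) : n = 0 ∨ n = 1 := by
  by_contra hc
  push_neg at hc
  have : n ≤ -1 ∨ 2 ≤ n := by omega
  rcases this with h' | h'
  · have : (n : ℝ) ≤ -1 := by exact_mod_cast h'
    nlinarith
  · have : (2 : ℝ) ≤ (n : ℝ) := by exact_mod_cast h'
    nlinarith

lemma minSetAux (b₁₁ b₂₂ : ℝ) (h₁ : 0 < b₁₁) (h₂ : 0 < b₂₂) :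
    {a | a ∈ latticePts 2 ∧ ∀ b ∈ latticePts 2,
        (a - (fun _ => (1/2:ℝ))) ⬝ᵥ ((!![b₁₁, 0; 0, b₂₂]).mulVec (a - (fun _ => (1/2:ℝ)))) ≤
        (b - (fun _ => (1/2:ℝ))) ⬝ᵥ ((!![b₁₁, 0; 0, b₂₂]).mulVec (b - (fun _ => (1/2:ℝ))))} =
      {(0 : Fin 2 → ℝ), stdV 2 0, stdV 2 1, stdV 2 0 + stdV 2 1} := by
  have hQ : ∀ x : Fin 2 → ℝ,
      (x - (fun _ => (1/2:ℝ))) ⬝ᵥ ((!![b₁₁, 0; 0, b₂₂]).mulVec (x - (fun _ => (1/2:ℝ)))) =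
      b₁₁ * (x 0 - 1/2)^2 + b₂₂ * (x 1 - 1/2)^2 := by
    intro x
    simp [Matrix.mulVec, dotProduct, Fin.sum_univ_two]
    ring
  ext x
  simp only [Set.mem_setOf_eq, Set.mem_insert_iff, Set.mem_singleton_iff]
  constructor
  · rintro ⟨⟨a, rfl⟩, hmin⟩
    have h0 : (fun i => ((![0,0] i : ℤ) : ℝ)) ∈ latticePts 2 := ⟨![0,0], rfl⟩
    have := hmin _ h0
    rw [hQ, hQ] at this
    simp at this
    have e0 : ((a 0 : ℝ) - 1/2)^2 ≤ 1/4 := by nlinarith [intboundAux (a 0), intboundAux (a 1)]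
    have e1 : ((a 1 : ℝ) - 1/2)^2 ≤ 1/4 := by nlinarith [intboundAux (a 0), intboundAux (a 1)]
    rcases inteqAux _ e0 with ha0 | ha0 <;> rcases inteqAux _ e1 with ha1 | ha1
    · left; funext i; fin_cases i <;> simp [ha0, ha1]
    · right; right; left; funext i; fin_cases i <;> simp [stdV, ha0, ha1]
    · right; left; funext i; fin_cases i <;> simp [stdV, ha0, ha1]
    · right; right; right; funext i; fin_cases i <;> simp [stdV, Pi.single_apply, ha0, ha1]
  · intro h
    have hmin : ∀ x : Fin 2 → ℝ, (x 0 - 1/2)^2 = 1/4 → (x 1 - 1/2)^2 = 1/4 →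
        ∀ b ∈ latticePts 2,
        (x - (fun _ => (1/2:ℝ))) ⬝ᵥ ((!![b₁₁, 0; 0, b₂₂]).mulVec (x - (fun _ => (1/2:ℝ)))) ≤
        (b - (fun _ => (1/2:ℝ))) ⬝ᵥ ((!![b₁₁, 0; 0, b₂₂]).mulVec (b - (fun _ => (1/2:ℝ)))) := by
      rintro x e0 e1 b ⟨c, rfl⟩
      rw [hQ, hQ, e0, e1]
      have hc0 : b₁₁ * (1/4 : ℝ) ≤ b₁₁ * ((c 0 : ℝ) - 1/2)^2 :=
        mul_le_mul_of_nonneg_left (intboundAux (c 0)) h₁.le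
      have hc1 : b₂₂ * (1/4 : ℝ) ≤ b₂₂ * ((c 1 : ℝ) - 1/2)^2 :=
        mul_le_mul_of_nonneg_left (intboundAux (c 1)) h₂.le
      linarith
    rcases h with rfl | rfl | rfl | rfl
    · exact ⟨⟨![0,0], by funext i; fin_cases i <;> simp⟩,
        hmin _ (by norm_num) (by norm_num)⟩
    · exact ⟨⟨![1,0], by funext i; fin_cases i <;> simp [stdV]⟩,
        hmin _ (by simp [stdV]; norm_num) (by simp [stdV]; norm_num)⟩
    · exact ⟨⟨![0,1], by funext i; fin_cases i <;> simp [stdV]⟩,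
        hmin _ (by simp [stdV]; norm_num) (by simp [stdV]; norm_num)⟩
    · exact ⟨⟨![1,1], by funext i; fin_cases i <;> simp [stdV, Pi.single_apply]⟩,
        hmin _ (by simp [stdV]; norm_num) (by simp [stdV]; norm_num)⟩

end AuxDelaunay

/-- For a diagonal positive definite form `B = diag(b₁₁, b₂₂)`, the unit square
`σ₅ = conv{0, s₁, s₂, s₁+s₂}` is a Delaunay cell, and it is the union
`σ₁ ∪ σ₂` as well as the union `σ₃ ∪ σ₄`. -/
theorem delaunay_cell_square_diagonal
    (b₁₁ b₂₂ : ℝ) (h₁ : 0 < b₁₁) (h₂ : 0 < b₂₂) :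
    IsDelaunayCell
      (fun x y => x ⬝ᵥ ((!![b₁₁, 0; 0, b₂₂]).mulVec y))
      (convexHull ℝ {(0 : Fin 2 → ℝ), stdV 2 0, stdV 2 1, stdV 2 0 + stdV 2 1}) ∧
    convexHull ℝ {(0 : Fin 2 → ℝ), stdV 2 0, stdV 2 1, stdV 2 0 + stdV 2 1} =
      convexHull ℝ {(0 : Fin 2 → ℝ), stdV 2 0, stdV 2 0 + stdV 2 1} ∪
      convexHull ℝ {(0 : Fin 2 → ℝ), stdV 2 1, stdV 2 0 + stdV 2 1} ∧
    convexHull ℝ {(0 : Fin 2 → ℝ), stdV 2 0, stdV 2 1, stdV 2 0 + stdV 2 1} =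
      convexHull ℝ {(0 : Fin 2 → ℝ), stdV 2 0, stdV 2 1} ∪
      convexHull ℝ {stdV 2 0, stdV 2 1, stdV 2 0 + stdV 2 1} := by
  refine ⟨⟨fun _ => (1/2:ℝ), ?_⟩, ?_, ?_⟩
  · rw [minSetAux b₁₁ b₂₂ h₁ h₂]
  · apply Set.Subset.antisymm
    · intro z hz
      obtain ⟨⟨h00, h01⟩, h10, h11⟩ := squareBoundsAux z hz
      rcases le_total (z 1) (z 0) with hle | hle
      · left
        have := combo3Aux (0 : Fin 2 → ℝ) (stdV 2 0) (stdV 2 0 + stdV 2 1)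
          (1 - z 0) (z 0 - z 1) (z 1) (by linarith) (by linarith) h10 (by ring)
        rwa [reconAux z _ _ _ _ _ _ (by simp [stdV, Pi.single_apply])
          (by simp [stdV, Pi.single_apply])] at this
      · right
        have := combo3Aux (0 : Fin 2 → ℝ) (stdV 2 1) (stdV 2 0 + stdV 2 1)
          (1 - z 1) (z 1 - z 0) (z 0) (by linarith) (by linarith) h00 (by ring)
        rwa [reconAux z _ _ _ _ _ _ (by simp [stdV, Pi.single_apply])
          (by simp [stdV, Pi.single_apply])] at this
    · apply Set.union_subset <;> apply convexHull_mono <;> intro x hx <;>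
        simp only [Set.mem_insert_iff, Set.mem_singleton_iff] at hx ⊢ <;> tauto
  · apply Set.Subset.antisymm
    · intro z hz
      obtain ⟨⟨h00, h01⟩, h10, h11⟩ := squareBoundsAux z hz
      rcases le_total (z 0 + z 1) 1 with hle | hle
      · left
        have := combo3Aux (0 : Fin 2 → ℝ) (stdV 2 0) (stdV 2 1)
          (1 - z 0 - z 1) (z 0) (z 1) (by linarith) h00 h10 (by ring)
        rwa [reconAux z _ _ _ _ _ _ (by simp [stdV, Pi.single_apply])
          (by simp [stdV, Pi.single_apply])] at this
      · right
        have := combo3Aux (stdV 2 0) (stdV 2 1) (stdV 2 0 + stdV 2 1)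
          (1 - z 1) (1 - z 0) (z 0 + z 1 - 1) (by linarith) (by linarith) (by linarith) (by ring)
        rwa [reconAux z _ _ _ _ _ _ (by simp [stdV, Pi.single_apply]; try ring)
          (by simp [stdV, Pi.single_apply]; try ring)] at this
    · apply Set.union_subset <;> apply convexHull_mono <;> intro x hx <;>
        simp only [Set.mem_insert_iff, Set.mem_singleton_iff] at hx ⊢ <;> tauto
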